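/- Let a ∈ ℂ with a² + a + 2 = 0 and consider the arrangement K' of the 12 lines ℓ₃, ℓ₄, ℓ₆, ℓ₇, ℓ₈, ℓ₉, ℓ₁₀, ℓ₁₁, ℓ₁₃, ℓ₁₄, ℓ₁₆, ℓ₁₇ from the Klein arrangement. Every pair of distinct lines in K' meets in a point (no two are parallel in ℙ², trivially), no point lies on more than 3 of these lines, there are exactly 12 points lying on exactly 3 lines, and exactly 30 points lying on exactly 2 lines. -/

import Mathlib

/-! The coefficients of `K'` lie in `ℤ[ω]`, `ω² + ω + 2 = 0`, which embeds into `ℂ` by `ω ↦ a`.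
Two distinct lines `ℓᵢ, ℓⱼ` meet in the point `ℓᵢ × ℓⱼ` (cross product), and `ℓₖ` passes through
it iff the triple product `ℓₖ · (ℓᵢ × ℓⱼ)` vanishes. A point on at least two lines is the cross
product of any two of them, so it is determined by the set of lines through it; hence the points
of multiplicity `n ≥ 2` correspond to the `n`-element sets among the sets of lines through the
pairwise intersections, which are computed exactly in `ℤ[ω]`. -/

/-- Coefficient vectors of the 12 lines ℓ₃,ℓ₄,ℓ₆,ℓ₇,ℓ₈,ℓ₉,ℓ₁₀,ℓ₁₁,ℓ₁₃,ℓ₁₄,ℓ₁₆,ℓ₁₇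
of the Klein subarrangement, where `a² + a + 2 = 0`. -/
def kleinSubLines (a : ℂ) : Fin 12 → Fin 3 → ℂ :=
  ![![a, 1, -1], ![a, -1, 1], ![1, a, -1], ![a, -1, -1], ![-1, 1, a],
    ![a, 1, 1], ![-1, a, 1], ![-1, -1, a], ![-1, a, -1], ![1, a, 1],
    ![1, -1, a], ![1, 1, a]]

/-- A point of `ℙ²(ℂ)` lies on the line with coefficient vector `v` iff the
corresponding linear form vanishes at (a representative of) the point. -/
noncomputable def onLine (v : Fin 3 → ℂ) (p : Projectivization ℂ (Fin 3 → ℂ)) : Prop :=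
  v 0 * p.rep 0 + v 1 * p.rep 1 + v 2 * p.rep 2 = 0

open Matrix Projectivization Function
open scoped LinearAlgebra.Projectivization

namespace Projectivization

variable {F : Type*} [Field F] [DecidableEq F]

theorem eq_cross_of_orthogonal {v w p : ℙ F (Fin 3 → F)} (hvw : v ≠ w)
    (hv : v.orthogonal p) (hw : w.orthogonal p) : p = cross v w := by
  induction v with | h v hv0 =>
  induction w with | h w hw0 =>
  induction p with | h p hp0 =>
  rw [orthogonal_mk hv0 hp0] at hv
  rw [orthogonal_mk hw0 hp0] at hw
  rw [cross_mk_of_ne hv0 hw0 hvw, eq_comm, mk_eq_mk_iff_crossProduct_eq_zero,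
    cross_cross_eq_smul_sub_smul, hv, hw, zero_smul, zero_smul, sub_zero]

variable {ι : Type*} {ℓ : ι → ℙ F (Fin 3 → F)} {S : ι → ι → Finset ι}

theorem setOf_orthogonal_eq_of_orthogonal (hℓ : Injective ℓ)
    (hS : ∀ i j, i ≠ j → {k | (ℓ k).orthogonal (cross (ℓ i) (ℓ j))} = ↑(S i j))
    {p : ℙ F (Fin 3 → F)} {i j : ι} (hij : i ≠ j)
    (hi : (ℓ i).orthogonal p) (hj : (ℓ j).orthogonal p) :
    {k | (ℓ k).orthogonal p} = ↑(S i j) := by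
  rw [eq_cross_of_orthogonal (hℓ.ne hij) hi hj, hS i j hij]

theorem ncard_setOf_orthogonal_le [Finite ι] (hℓ : Injective ℓ)
    (hS : ∀ i j, i ≠ j → {k | (ℓ k).orthogonal (cross (ℓ i) (ℓ j))} = ↑(S i j))
    {m : ℕ} (hm : 1 ≤ m) (hSm : ∀ i j, i ≠ j → (S i j).card ≤ m) (p : ℙ F (Fin 3 → F)) :
    {k | (ℓ k).orthogonal p}.ncard ≤ m := by
  by_cases h : {k | (ℓ k).orthogonal p}.ncard ≤ 1
  · exact h.trans hm
  obtain ⟨i, j, hi, hj, hij⟩ := (Set.one_lt_ncard_iff (Set.toFinite _)).1 (not_le.1 h)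
  rw [setOf_orthogonal_eq_of_orthogonal hℓ hS hij hi hj, Set.ncard_coe_finset]
  exact hSm i j hij

theorem ncard_setOf_ncard_setOf_orthogonal_eq [Fintype ι] [DecidableEq ι] (hℓ : Injective ℓ)
    (hS : ∀ i j, i ≠ j → {k | (ℓ k).orthogonal (cross (ℓ i) (ℓ j))} = ↑(S i j))
    {n : ℕ} (hn : 2 ≤ n) :
    {p : ℙ F (Fin 3 → F) | {k | (ℓ k).orthogonal p}.ncard = n}.ncard =
      ((Finset.univ.offDiag.image fun q : ι × ι => S q.1 q.2).filter (·.card = n)).card := by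
  set lines : ℙ F (Fin 3 → F) → Set ι := fun p => {k | (ℓ k).orthogonal p}
  have two_lines {p} (hp : (lines p).ncard = n) :
      ∃ i j, i ≠ j ∧ (ℓ i).orthogonal p ∧ (ℓ j).orthogonal p := by
    obtain ⟨i, j, hi, hj, hij⟩ :=
      (Set.one_lt_ncard_iff (Set.toFinite _)).1 (show 1 < (lines p).ncard by omega)
    exact ⟨i, j, hij, hi, hj⟩
  have hinj : Set.InjOn lines {p | (lines p).ncard = n} := by
    intro p hp p' _ hpp'
    obtain ⟨i, j, hij, hi, hj⟩ := two_lines hp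
    have hi' : i ∈ lines p' := hpp' ▸ hi
    have hj' : j ∈ lines p' := hpp' ▸ hj
    rw [eq_cross_of_orthogonal (hℓ.ne hij) hi hj, eq_cross_of_orthogonal (hℓ.ne hij) hi' hj']
  have himage : lines '' {p | (lines p).ncard = n} =
      ((↑) : Finset ι → Set ι) ''
        ↑((Finset.univ.offDiag.image fun q : ι × ι => S q.1 q.2).filter (·.card = n)) := by
    ext s
    simp only [Set.mem_image, Set.mem_ofPred_eq, Finset.coe_filter, Finset.mem_image,
      Finset.mem_offDiag, Finset.mem_univ, true_and, Prod.exists]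
    constructor
    · rintro ⟨p, hp, rfl⟩
      obtain ⟨i, j, hij, hi, hj⟩ := two_lines hp
      have hlines := setOf_orthogonal_eq_of_orthogonal hℓ hS hij hi hj
      refine ⟨S i j, ⟨⟨i, j, hij, rfl⟩, ?_⟩, hlines.symm⟩
      rw [← Set.ncard_coe_finset, ← hlines, hp]
    · rintro ⟨t, ⟨⟨i, j, hij, rfl⟩, ht⟩, rfl⟩
      refine ⟨cross (ℓ i) (ℓ j), ?_, hS i j hij⟩
      rw [show lines _ = _ from hS i j hij, Set.ncard_coe_finset, ht]
  rw [← hinj.ncard_image, himage, Finset.coe_injective.injOn.ncard_image, Set.ncard_coe_finset]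

end Projectivization

namespace RingHom

variable {R S : Type*} [CommRing R] [CommRing S] (f : R →+* S)

theorem comp_crossProduct (v w : Fin 3 → R) : f ∘ (v ⨯₃ w) = (f ∘ v) ⨯₃ (f ∘ w) := by
  ext i
  fin_cases i <;> simp [cross_apply]

variable {f}

theorem comp_eq_zero_iff (hf : Injective f) {ι : Type*} {v : ι → R} : f ∘ v = 0 ↔ v = 0 :=
  hf.comp_left.eq_iff' (funext fun _ => map_zero f)

end RingHom

section Transfer

variable {R F : Type*} [CommRing R] [Field F] {f : R →+* F}
  {u v w : Fin 3 → R} (hu : f ∘ u ≠ 0) (hv : f ∘ v ≠ 0) (hw : f ∘ w ≠ 0)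

theorem mk_comp_eq_mk_comp_iff (hf : Injective f) :
    mk F (f ∘ v) hv = mk F (f ∘ w) hw ↔ v ⨯₃ w = 0 := by
  rw [mk_eq_mk_iff_crossProduct_eq_zero, ← f.comp_crossProduct, f.comp_eq_zero_iff hf]

theorem orthogonal_mk_comp_cross_iff [DecidableEq F] (hf : Injective f) (hvw : v ⨯₃ w ≠ 0) :
    (mk F (f ∘ u) hu).orthogonal (cross (mk F (f ∘ v) hv) (mk F (f ∘ w) hw)) ↔
      u ⬝ᵥ v ⨯₃ w = 0 := by
  have hvw' : (f ∘ v) ⨯₃ (f ∘ w) ≠ 0 := by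
    rwa [← f.comp_crossProduct, Ne, f.comp_eq_zero_iff hf]
  rw [cross_mk_of_cross_ne_zero hv hw hvw', orthogonal_mk, ← f.comp_crossProduct,
    ← f.map_dotProduct, map_eq_zero_iff f hf]

end Transfer

open QuadraticAlgebra

/-- `ℤ[ω]`, `ω² + ω + 2 = 0`: a computable copy of `ℤ[a]`, in which the incidences of `K'` are
decided exactly. -/
abbrev Zω := QuadraticAlgebra ℤ (-2) (-1)

theorem QuadraticAlgebra.lift_injective_of_im_ne_zero {c d : ℤ}
    (u : {u : ℂ // u * u = c • 1 + d • u}) (hu : (u : ℂ).im ≠ 0) :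
    Injective (lift u) := by
  rw [injective_iff_map_eq_zero]
  intro z hz
  simp only [lift_apply_apply, zsmul_eq_mul, mul_one] at hz
  have him : (z.im : ℝ) * (u : ℂ).im = 0 := by simpa using congrArg Complex.im hz
  have hzim : z.im = 0 := by exact_mod_cast (mul_eq_zero.1 him).resolve_right hu
  have hzre : z.re = 0 := by simpa [hzim] using congrArg Complex.re hz
  ext <;> simp [hzre, hzim]

theorem Complex.im_ne_zero_of_sq_add_add_two_eq_zero {a : ℂ} (ha : a ^ 2 + a + 2 = 0) :
    a.im ≠ 0 := by
  intro him
  have hre := congrArg Complex.re ha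
  simp only [pow_two, Complex.add_re, Complex.mul_re, him, mul_zero, sub_zero] at hre
  norm_num at hre
  nlinarith [sq_nonneg (2 * a.re + 1)]

noncomputable def Zω.toComplex {a : ℂ} (ha : a ^ 2 + a + 2 = 0) : Zω →+* ℂ :=
  (lift ⟨a, by linear_combination ha⟩ : Zω →ₐ[ℤ] ℂ).toRingHom

theorem Zω.toComplex_injective {a : ℂ} (ha : a ^ 2 + a + 2 = 0) :
    Injective (Zω.toComplex ha) :=
  lift_injective_of_im_ne_zero _ (Complex.im_ne_zero_of_sq_add_add_two_eq_zero ha)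

theorem Zω.toComplex_omega {a : ℂ} (ha : a ^ 2 + a + 2 = 0) : Zω.toComplex ha ω = a := by
  simp [Zω.toComplex]

def kleinSubLinesZω : Fin 12 → Fin 3 → Zω :=
  ![![ω, 1, -1], ![ω, -1, 1], ![1, ω, -1], ![ω, -1, -1], ![-1, 1, ω],
    ![ω, 1, 1], ![-1, ω, 1], ![-1, -1, ω], ![-1, ω, -1], ![1, ω, 1],
    ![1, -1, ω], ![1, 1, ω]]

def kleinThru (i j : Fin 12) : Finset (Fin 12) :=
  Finset.univ.filter fun k =>
    kleinSubLinesZω k ⬝ᵥ kleinSubLinesZω i ⨯₃ kleinSubLinesZω j = 0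

set_option maxRecDepth 10000 in
theorem kleinSubLinesZω_ne_zero : ∀ i, kleinSubLinesZω i ≠ 0 := by decide

set_option maxRecDepth 10000 in
theorem kleinSubLinesZω_cross_ne_zero :
    ∀ i j, i ≠ j → kleinSubLinesZω i ⨯₃ kleinSubLinesZω j ≠ 0 := by
  decide

set_option maxRecDepth 10000 in
theorem card_kleinThru_le_three : ∀ i j, i ≠ j → (kleinThru i j).card ≤ 3 := by decide

set_option maxRecDepth 10000 in
theorem card_kleinThru_image_filter_card_eq_three :
    ((Finset.univ.offDiag.image fun q : Fin 12 × Fin 12 => kleinThru q.1 q.2).filter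
      (·.card = 3)).card = 12 := by
  decide

set_option maxRecDepth 10000 in
theorem card_kleinThru_image_filter_card_eq_two :
    ((Finset.univ.offDiag.image fun q : Fin 12 × Fin 12 => kleinThru q.1 q.2).filter
      (·.card = 2)).card = 30 := by
  decide

theorem onLine_iff_orthogonal {v : Fin 3 → ℂ} (hv : v ≠ 0) (p : ℙ ℂ (Fin 3 → ℂ)) :
    onLine v p ↔ (mk ℂ v hv).orthogonal p := by
  rw [← p.mk_rep, orthogonal_mk hv p.rep_nonzero, vec3_dotProduct, p.mk_rep]
  rfl

section KleinLines

variable {a : ℂ} (ha : a ^ 2 + a + 2 = 0)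

theorem kleinSubLines_eq_comp (i : Fin 12) :
    kleinSubLines a i = Zω.toComplex ha ∘ kleinSubLinesZω i := by
  funext k
  fin_cases i <;> fin_cases k <;> simp [kleinSubLines, kleinSubLinesZω, Zω.toComplex_omega]

theorem comp_kleinSubLinesZω_ne_zero (i : Fin 12) :
    Zω.toComplex ha ∘ kleinSubLinesZω i ≠ 0 := by
  rw [Ne, RingHom.comp_eq_zero_iff (Zω.toComplex_injective ha)]
  exact kleinSubLinesZω_ne_zero i

noncomputable def kleinLine (i : Fin 12) : ℙ ℂ (Fin 3 → ℂ) :=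
  mk ℂ _ (comp_kleinSubLinesZω_ne_zero ha i)

theorem onLine_kleinSubLines_iff (i : Fin 12) (p : ℙ ℂ (Fin 3 → ℂ)) :
    onLine (kleinSubLines a i) p ↔ (kleinLine ha i).orthogonal p := by
  rw [kleinSubLines_eq_comp ha]
  exact onLine_iff_orthogonal _ p

theorem kleinLine_injective : Injective (kleinLine ha) := by
  intro i j hij
  by_contra hne
  exact kleinSubLinesZω_cross_ne_zero i j hne
    ((mk_comp_eq_mk_comp_iff _ _ (Zω.toComplex_injective ha)).1 hij)

theorem setOf_kleinLine_orthogonal_cross {i j : Fin 12} (hij : i ≠ j) :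
    {k | (kleinLine ha k).orthogonal (cross (kleinLine ha i) (kleinLine ha j))} =
      ↑(kleinThru i j) := by
  ext k
  simp only [Set.mem_ofPred_eq, kleinThru, Finset.coe_filter, Finset.mem_univ, true_and]
  exact orthogonal_mk_comp_cross_iff _ _ _ (Zω.toComplex_injective ha)
    (kleinSubLinesZω_cross_ne_zero i j hij)

end KleinLines

/-- The 12 lines of `K'` pairwise intersect, no point lies on more than 3 of
them, there are exactly 12 triple points and exactly 30 double points. -/
theorem klein_sub_arrangement_singularities (a : ℂ) (ha : a ^ 2 + a + 2 = 0) :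
    (∀ i j : Fin 12, i ≠ j →
        ∃ p : Projectivization ℂ (Fin 3 → ℂ),
          onLine (kleinSubLines a i) p ∧ onLine (kleinSubLines a j) p) ∧
    (∀ p : Projectivization ℂ (Fin 3 → ℂ),
        {i : Fin 12 | onLine (kleinSubLines a i) p}.ncard ≤ 3) ∧
    {p : Projectivization ℂ (Fin 3 → ℂ) |
        {i : Fin 12 | onLine (kleinSubLines a i) p}.ncard = 3}.ncard = 12 ∧
    {p : Projectivization ℂ (Fin 3 → ℂ) |
        {i : Fin 12 | onLine (kleinSubLines a i) p}.ncard = 2}.ncard = 30 := by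
  have hinj := kleinLine_injective ha
  have hS := fun i j (hij : i ≠ j) => setOf_kleinLine_orthogonal_cross ha hij
  simp only [onLine_kleinSubLines_iff ha]
  refine ⟨fun i j hij =>
      ⟨_, orthogonal_cross_left (hinj.ne hij), orthogonal_cross_right (hinj.ne hij)⟩,
    ncard_setOf_orthogonal_le hinj hS (by norm_num) card_kleinThru_le_three, ?_, ?_⟩
  · rw [ncard_setOf_ncard_setOf_orthogonal_eq hinj hS (by norm_num),
      card_kleinThru_image_filter_card_eq_three]
  · rw [ncard_setOf_ncard_setOf_orthogonal_eq hinj hS le_rfl,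
      card_kleinThru_image_filter_card_eq_two]
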